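/- arXiv:2402.15912 — 3 statements merged into one kernel-verified Lean document; each statement's English description precedes it below -/
import Mathlib

section
/- For the exponential utility u(w) = (1 − e^{−rw})/r with parameter r ≠ 0 and quasiprobability parameter q = 1/2, the optimal expected utility of any density matrix ρ_S on ℂ^{d_S} equals 𝓤(ρ_S) = (1/r)(1 − Σ_k u_k e^{r ε_k}), where u_1 ≥ u_2 ≥ ... ≥ u_{d_S} are the eigenvalues of the positive semidefinite matrix e^{−rH_S/2} ρ_S e^{−rH_S/2} listed in decreasing order. -/
open Matrix BigOperators Finset Kronecker
open scoped ComplexOrder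

noncomputable section

namespace Daemonic

/-- The outer product `|x⟩⟨y|` as a matrix. -/
def ketbra {ι : Type*} [Fintype ι] (x y : ι → ℂ) : Matrix ι ι ℂ :=
  Matrix.vecMulVec x (star y)

/-- A family of vectors is orthonormal. -/
def ONFam {ι κ : Type*} [Fintype ι] [DecidableEq κ] (v : κ → ι → ℂ) : Prop :=
  ∀ i j, star (v i) ⬝ᵥ v j = if i = j then 1 else 0

/-- A density matrix: positive semidefinite with unit trace. -/
def IsDensity {ι : Type*} [Fintype ι] (ρ : Matrix ι ι ℂ) : Prop :=
  ρ.PosSemidef ∧ ρ.trace = 1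

/-- The matrix element `⟨x|M|y⟩`. -/
def matElem {ι : Type*} [Fintype ι] (M : Matrix ι ι ℂ) (x y : ι → ℂ) : ℂ :=
  star x ⬝ᵥ (M *ᵥ y)

/-- The Hamiltonian `H_S = ∑ₖ εₖ |εₖ⟩⟨εₖ|`. -/
def ham {n : ℕ} (ε : Fin n → ℝ) (v : Fin n → Fin n → ℂ) : Matrix (Fin n) (Fin n) ℂ :=
  ∑ k, (ε k : ℂ) • ketbra (v k) (v k)

/-- `e^{t H_S} = ∑ₖ e^{t εₖ} |εₖ⟩⟨εₖ|` (functional calculus in the eigenbasis of `H_S`). -/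
def expHam {n : ℕ} (ε : Fin n → ℝ) (v : Fin n → Fin n → ℂ) (t : ℝ) :
    Matrix (Fin n) (Fin n) ℂ :=
  ∑ k, (Real.exp (t * ε k) : ℂ) • ketbra (v k) (v k)

/-- The expected utility `⟨u(w)⟩_{ρ,U}` for quasiprobability parameter `q`,
with respect to the eigenvalues `ε` and orthonormal eigenvectors `v` of `H_S`. -/
def expUtil {n : ℕ} (u : ℝ → ℝ) (q : ℝ) (ε : Fin n → ℝ) (v : Fin n → Fin n → ℂ)
    (ρ U : Matrix (Fin n) (Fin n) ℂ) : ℝ :=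
  ∑ i, ∑ j, ∑ k,
    (matElem ρ (v i) (v j) * matElem Uᴴ (v j) (v k) * matElem U (v k) (v i)).re *
      u (q * ε i + (1 - q) * ε j - ε k)

/-- The optimal expected utility `𝓤(ρ) = max over unitaries U of ⟨u(w)⟩_{ρ,U}`. -/
def optUtil {n : ℕ} (u : ℝ → ℝ) (q : ℝ) (ε : Fin n → ℝ) (v : Fin n → Fin n → ℂ)
    (ρ : Matrix (Fin n) (Fin n) ℂ) : ℝ :=
  ⨆ U : Matrix.unitaryGroup (Fin n) ℂ, expUtil u q ε v ρ (U : Matrix (Fin n) (Fin n) ℂ)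

/-- The exponential utility `u(w) = (1 - e^{-r w})/r`. -/
def expUtility (r : ℝ) : ℝ → ℝ := fun w => (1 - Real.exp (-r * w)) / r

/-- The partial trace over the ancilla. -/
def ptraceA {dS dA : ℕ} (ρSA : Matrix (Fin dS × Fin dA) (Fin dS × Fin dA) ℂ) :
    Matrix (Fin dS) (Fin dS) ℂ :=
  Matrix.of fun i j => ∑ a, ρSA (i, a) (j, a)

/-- The unnormalized conditional state `Tr_A((I ⊗ Π_a) ρ_SA (I ⊗ Π_a))`, where
`Π_a = |a⟩⟨a|` projects onto the vector `w a` of an orthonormal basis `w` of the ancilla. -/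
def condUnnorm {dS dA : ℕ} (w : Fin dA → Fin dA → ℂ)
    (ρSA : Matrix (Fin dS × Fin dA) (Fin dS × Fin dA) ℂ) (a : Fin dA) :
    Matrix (Fin dS) (Fin dS) ℂ :=
  Matrix.of fun i j => ∑ c, ∑ d, ρSA (i, c) (j, d) * (w a d * star (w a c))

/-- The outcome probability `p_a = Tr((I ⊗ Π_a) ρ_SA)`. -/
def prob {dS dA : ℕ} (w : Fin dA → Fin dA → ℂ)
    (ρSA : Matrix (Fin dS × Fin dA) (Fin dS × Fin dA) ℂ) (a : Fin dA) : ℝ :=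
  ((condUnnorm w ρSA a).trace).re

/-- The conditional state `ρ_{S|a}`. -/
def condState {dS dA : ℕ} (w : Fin dA → Fin dA → ℂ)
    (ρSA : Matrix (Fin dS × Fin dA) (Fin dS × Fin dA) ℂ) (a : Fin dA) :
    Matrix (Fin dS) (Fin dS) ℂ :=
  ((prob w ρSA a : ℂ))⁻¹ • condUnnorm w ρSA a

/-- The daemonic expected utility `𝓤_{{Π_a}}(ρ_SA) = ∑_a p_a 𝓤(ρ_{S|a})`. -/
def daemonicUtil {dS dA : ℕ} (u : ℝ → ℝ) (q : ℝ) (ε : Fin dS → ℝ)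
    (v : Fin dS → Fin dS → ℂ) (w : Fin dA → Fin dA → ℂ)
    (ρSA : Matrix (Fin dS × Fin dA) (Fin dS × Fin dA) ℂ) : ℝ :=
  ∑ a, prob w ρSA a * optUtil u q ε v (condState w ρSA a)

/-- The maximum daemonic gain `δ𝓤(ρ_SA)`, maximizing over all orthonormal bases of the
ancilla (equivalently, over the rows of all unitary matrices). -/
def daemonicGain {dS dA : ℕ} (u : ℝ → ℝ) (q : ℝ) (ε : Fin dS → ℝ)
    (v : Fin dS → Fin dS → ℂ)
    (ρSA : Matrix (Fin dS × Fin dA) (Fin dS × Fin dA) ℂ) : ℝ :=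
  (⨆ V : Matrix.unitaryGroup (Fin dA) ℂ,
      daemonicUtil u q ε v (fun a => (V : Matrix (Fin dA) (Fin dA) ℂ) a) ρSA) -
    optUtil u q ε v (ptraceA ρSA)

/-- The ergotropy of a (possibly unnormalized) state `σ` with respect to a Hamiltonian `H`:
`ℰ_H(σ) = max over unitaries U of (Tr(Hσ) - Tr(H U σ U†))`. -/
def ergotropyH {n : ℕ} (H σ : Matrix (Fin n) (Fin n) ℂ) : ℝ :=
  ⨆ U : Matrix.unitaryGroup (Fin n) ℂ,
    ((H * σ).trace -
      (H * ((U : Matrix (Fin n) (Fin n) ℂ) * σ * (U : Matrix (Fin n) (Fin n) ℂ)ᴴ)).trace).re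

/-- A separable bipartite state: a convex combination of product states. -/
def IsSeparable {dS dA : ℕ} (ρSA : Matrix (Fin dS × Fin dA) (Fin dS × Fin dA) ℂ) : Prop :=
  ∃ (m : ℕ) (p : Fin m → ℝ) (σ : Fin m → Matrix (Fin dS) (Fin dS) ℂ)
    (τ : Fin m → Matrix (Fin dA) (Fin dA) ℂ),
    (∀ k, 0 ≤ p k) ∧ (∑ k, p k = 1) ∧ (∀ k, IsDensity (σ k)) ∧ (∀ k, IsDensity (τ k)) ∧
    ρSA = ∑ k, (p k : ℂ) • (σ k ⊗ₖ τ k)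

/-- A classical-quantum state `ρ_SA = ∑ₖ pₖ Pₖ ⊗ ρᴬₖ` with `Pₖ` mutually orthogonal
rank-one projectors summing to the identity. -/
def IsClassicalQuantum {dS dA : ℕ}
    (ρSA : Matrix (Fin dS × Fin dA) (Fin dS × Fin dA) ℂ) : Prop :=
  ∃ (p : Fin dS → ℝ) (ψ : Fin dS → Fin dS → ℂ) (τ : Fin dS → Matrix (Fin dA) (Fin dA) ℂ),
    (∀ k, 0 ≤ p k) ∧ (∑ k, p k = 1) ∧ ONFam ψ ∧ (∀ k, IsDensity (τ k)) ∧
    ρSA = ∑ k, (p k : ℂ) • (ketbra (ψ k) (ψ k) ⊗ₖ τ k)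

/-- The dephasing map associated with an orthonormal basis `v`. -/
def dephase {n : ℕ} (v : Fin n → Fin n → ℂ) (ρ : Matrix (Fin n) (Fin n) ℂ) :
    Matrix (Fin n) (Fin n) ℂ :=
  ∑ k, ketbra (v k) (v k) * ρ * ketbra (v k) (v k)

/-!
In the eigenbasis of `H_S` the triple sum defining `⟨u(w)⟩_{ρ,U}` is a trace, and for
`u(w) = (1 - e^{-rw})/r` and `q = 1/2` the weight `e^{-rw}` factorises as
`e^{-rεᵢ/2} e^{-rεⱼ/2} e^{rεₖ}`. Hence `⟨u(w)⟩_{ρ,U} = (1 - Tr(e^{rH} U σ U†))/r` with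
`σ = e^{-rH/2} ρ e^{-rH/2} = ∑ₗ uₗ |φₗ⟩⟨φₗ|`, that is
`⟨u(w)⟩_{ρ,U} = 1/r - ∑ₖₗ (e^{rεₖ}/r) uₗ |⟨εₖ|U|φₗ⟩|²`.
The matrix `|⟨εₖ|U|φₗ⟩|²` is doubly stochastic and `εₖ ↦ e^{rεₖ}/r` is increasing whatever the sign
of `r`, while `uₗ` decreases; by Birkhoff's theorem and the rearrangement inequality the sum is
smallest at the identity matrix, which is attained by the unitary sending each `φₖ` to `|εₖ⟩`.
-/

end Daemonic

theorem Antivary.sum_mul_le_sum_sum_mul_of_mem_doublyStochastic {R ι : Type*} [Field R]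
    [LinearOrder R] [IsStrictOrderedRing R] [Fintype ι] [DecidableEq ι] {f g : ι → R}
    (hfg : Antivary f g) {M : Matrix ι ι R} (hM : M ∈ doublyStochastic R ι) :
    ∑ i, f i * g i ≤ ∑ i, ∑ j, f i * g j * M i j := by
  obtain ⟨w, hw0, hw1, rfl⟩ := exists_eq_sum_perm_of_mem_doublyStochastic hM
  have hperm : ∀ σ : Equiv.Perm ι,
      ∑ i, ∑ j, f i * g j * σ.permMatrix R i j = ∑ i, f i * g (σ i) := by
    intro σ
    simp [PEquiv.toMatrix_apply]
  calc ∑ i, f i * g i = ∑ σ, w σ * ∑ i, f i * g i := by rw [← Finset.sum_mul, hw1, one_mul]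
    _ ≤ ∑ σ, w σ * ∑ i, f i * g (σ i) :=
      Finset.sum_le_sum fun σ _ =>
        mul_le_mul_of_nonneg_left hfg.sum_mul_le_sum_mul_comp_perm (hw0 σ)
    _ = ∑ i, ∑ j, f i * g j * (∑ σ, w σ • σ.permMatrix R) i j := by
      simp only [← hperm, Matrix.sum_apply, Matrix.smul_apply, smul_eq_mul, Finset.mul_sum]
      rw [Finset.sum_comm]
      refine Finset.sum_congr rfl fun i _ => ?_
      rw [Finset.sum_comm]
      refine Finset.sum_congr rfl fun j _ => Finset.sum_congr rfl fun σ _ => by ring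

theorem Matrix.trace_diagonal_mul_diagonal_mul_diagonal_mul_eq_sum {ι R : Type*} [Fintype ι]
    [DecidableEq ι] [CommSemiring R] (A B C : Matrix ι ι R) (g h c : ι → R) :
    (diagonal g * A * diagonal h * B * diagonal c * C).trace
      = ∑ i, ∑ j, ∑ k, A i j * B j k * C k i * (g i * h j * c k) := by
  simp only [trace, diag_apply, mul_apply, diagonal_apply, ite_mul, zero_mul, mul_ite, mul_zero,
    Finset.sum_ite_eq, Finset.sum_ite_eq', Finset.mem_univ, if_true, Finset.sum_mul]
  refine Finset.sum_congr rfl fun i _ => ?_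
  rw [Finset.sum_comm]
  exact Finset.sum_congr rfl fun _ _ => Finset.sum_congr rfl fun _ _ => by ring

theorem Matrix.normSq_mem_doublyStochastic {ι : Type*} [Fintype ι] [DecidableEq ι]
    {U : Matrix ι ι ℂ} (hU : U ∈ unitaryGroup ι ℂ) :
    Matrix.of (fun i j => Complex.normSq (U i j)) ∈ doublyStochastic ℝ ι := by
  have hrow : ∀ i, ∑ j, Complex.normSq (U i j) = 1 := fun i => by
    have h := congrFun (congrFun (mem_unitaryGroup_iff.mp hU) i) i
    simp only [mul_apply, star_apply, one_apply_eq, Complex.star_def, Complex.mul_conj] at h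
    exact_mod_cast h
  have hcol : ∀ j, ∑ i, Complex.normSq (U i j) = 1 := fun j => by
    have h := congrFun (congrFun (mem_unitaryGroup_iff'.mp hU) j) j
    simp only [mul_apply, star_apply, one_apply_eq, Complex.star_def, mul_comm (starRingEnd ℂ _),
      Complex.mul_conj] at h
    exact_mod_cast h
  exact mem_doublyStochastic_iff_sum.mpr ⟨fun _ _ => Complex.normSq_nonneg _, hrow, hcol⟩

theorem Real.monotone_exp_mul_div (r : ℝ) : Monotone fun x => Real.exp (r * x) / r := by
  intro a b hab
  rcases lt_trichotomy r 0 with hr | rfl | hr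
  · exact div_le_div_of_nonpos_of_le hr.le
      (Real.exp_le_exp.2 (mul_le_mul_of_nonpos_left hab hr.le))
  · simp
  · exact div_le_div_of_nonneg_right
      (Real.exp_le_exp.2 (mul_le_mul_of_nonneg_left hab hr.le)) hr.le

namespace Daemonic

section BraKet

variable {ι : Type*} [Fintype ι]

theorem matElem_ketbra (x y a b : ι → ℂ) :
    matElem (ketbra x y) a b = (star a ⬝ᵥ x) * (star y ⬝ᵥ b) := by
  simp only [matElem, ketbra, vecMulVec_mulVec, dotProduct_smul, op_smul_eq_mul]

theorem ketbra_mul_mul_ketbra (M : Matrix ι ι ℂ) (a b c d : ι → ℂ) :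
    ketbra a b * M * ketbra c d = matElem M b c • ketbra a d := by
  ext i j
  simp only [ketbra, matElem, mul_apply, vecMulVec_apply, dotProduct, mulVec, Matrix.smul_apply,
    smul_eq_mul, Pi.star_apply, Finset.mul_sum, Finset.sum_mul]
  rw [Finset.sum_comm]
  exact Finset.sum_congr rfl fun _ _ => Finset.sum_congr rfl fun _ _ => by ring

theorem trace_mul_ketbra (M : Matrix ι ι ℂ) (x y : ι → ℂ) :
    (M * ketbra x y).trace = matElem M y x := by
  simp only [ketbra, matElem, trace, Matrix.diag, mul_apply, vecMulVec_apply, dotProduct, mulVec,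
    Pi.star_apply, Finset.mul_sum]
  exact Finset.sum_congr rfl fun _ _ => Finset.sum_congr rfl fun _ _ => by ring

theorem matElem_conjTranspose (M : Matrix ι ι ℂ) (x y : ι → ℂ) :
    matElem Mᴴ x y = star (matElem M y x) := by
  simp only [matElem, dotProduct, mulVec, conjTranspose_apply, star_sum, star_mul', star_star,
    Pi.star_apply, Finset.mul_sum]
  rw [Finset.sum_comm]
  exact Finset.sum_congr rfl fun _ _ => Finset.sum_congr rfl fun _ _ => by ring

theorem trace_ketbra_mul_mul_ketbra_mul_conjTranspose (U : Matrix ι ι ℂ) (x y : ι → ℂ) :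
    (ketbra x x * U * ketbra y y * Uᴴ).trace = Complex.normSq (matElem U x y) := by
  rw [ketbra_mul_mul_ketbra, smul_mul, trace_smul, Matrix.trace_mul_comm, trace_mul_ketbra,
    matElem_conjTranspose, smul_eq_mul, Complex.star_def, Complex.mul_conj]

theorem trace_sum_ketbra_mul_mul_sum_ketbra_mul_conjTranspose {κ : Type*} [Fintype κ]
    (a b : κ → ℝ) (x y : κ → ι → ℂ) (U : Matrix ι ι ℂ) :
    ((∑ k, (a k : ℂ) • ketbra (x k) (x k)) * U * (∑ l, (b l : ℂ) • ketbra (y l) (y l))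
        * Uᴴ).trace = ((∑ k, ∑ l, a k * b l * Complex.normSq (matElem U (x k) (y l)) : ℝ) : ℂ) := by
  simp only [Finset.sum_mul, Finset.mul_sum, Matrix.smul_mul, Matrix.mul_smul, trace_sum,
    trace_smul, trace_ketbra_mul_mul_ketbra_mul_conjTranspose, smul_eq_mul]
  push_cast
  rw [Finset.sum_comm]
  exact Finset.sum_congr rfl fun _ _ => Finset.sum_congr rfl fun _ _ => by ring

end BraKet

section ColMat

variable {ι κ : Type*} [Fintype ι]

def colMat (v : κ → ι → ℂ) : Matrix ι κ ℂ := Matrix.of fun a k => v k a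

theorem conjTranspose_colMat_mul_mul_colMat (M : Matrix ι ι ℂ) (x y : κ → ι → ℂ) (k l : κ) :
    ((colMat x)ᴴ * M * colMat y) k l = matElem M (x k) (y l) := by
  simp only [colMat, matElem, mul_apply, conjTranspose_apply, of_apply, dotProduct, mulVec,
    Pi.star_apply, Finset.sum_mul, Finset.mul_sum]
  rw [Finset.sum_comm]
  exact Finset.sum_congr rfl fun _ _ => Finset.sum_congr rfl fun _ _ => by ring

variable [DecidableEq κ] {v : κ → ι → ℂ}

theorem ONFam.conjTranspose_colMat_mul_colMat (hv : ONFam v) : (colMat v)ᴴ * colMat v = 1 := by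
  ext k l
  rw [one_apply, ← hv k l]
  simp [colMat, mul_apply, dotProduct]

end ColMat

section Square

variable {ι : Type*} [Fintype ι] [DecidableEq ι] {v φ : ι → ι → ℂ}

theorem ONFam.colMat_mul_conjTranspose_colMat (hv : ONFam v) : colMat v * (colMat v)ᴴ = 1 :=
  mul_eq_one_comm.mp hv.conjTranspose_colMat_mul_colMat

theorem ONFam.colMat_mem_unitaryGroup (hv : ONFam v) : colMat v ∈ unitaryGroup ι ℂ :=
  mem_unitaryGroup_iff.mpr hv.colMat_mul_conjTranspose_colMat

theorem ONFam.matElem_colMat_mul_conjTranspose_colMat (hv : ONFam v) (hφ : ONFam φ) (k l : ι) :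
    matElem (colMat v * (colMat φ)ᴴ) (v k) (φ l) = (1 : Matrix ι ι ℂ) k l := by
  rw [← conjTranspose_colMat_mul_mul_colMat, ← Matrix.mul_assoc,
    hv.conjTranspose_colMat_mul_colMat, Matrix.one_mul, hφ.conjTranspose_colMat_mul_colMat]

theorem ONFam.sum_mul_le_sum_sum_mul_normSq_matElem (hv : ONFam v) (hφ : ONFam φ)
    {U : Matrix ι ι ℂ} (hU : U ∈ unitaryGroup ι ℂ) {f g : ι → ℝ}
    (hfg : Antivary f g) :
    ∑ k, f k * g k ≤ ∑ k, ∑ l, f k * g l * Complex.normSq (matElem U (v k) (φ l)) := by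
  have hW : (colMat v)ᴴ * U * colMat φ ∈ unitaryGroup ι ℂ :=
    mul_mem (mul_mem (Unitary.star_mem hv.colMat_mem_unitaryGroup) hU) hφ.colMat_mem_unitaryGroup
  simpa only [of_apply, conjTranspose_colMat_mul_mul_colMat] using
    hfg.sum_mul_le_sum_sum_mul_of_mem_doublyStochastic (normSq_mem_doublyStochastic hW)

end Square

section Hamiltonian

variable {n : ℕ} {v : Fin n → Fin n → ℂ}

theorem ONFam.conjTranspose_colMat_mul_expHam_mul_colMat (hv : ONFam v) (ε : Fin n → ℝ)
    (t : ℝ) :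
    (colMat v)ᴴ * expHam ε v t * colMat v = diagonal fun k => (Real.exp (t * ε k) : ℂ) := by
  have hv' : ∀ i j, star (v i) ⬝ᵥ v j = if i = j then 1 else 0 := hv
  ext i j
  simp only [expHam, Matrix.mul_sum, Matrix.sum_mul, Matrix.mul_smul, Matrix.smul_mul,
    Matrix.sum_apply, Matrix.smul_apply, conjTranspose_colMat_mul_mul_colMat, matElem_ketbra, hv',
    smul_eq_mul, diagonal_apply, mul_ite, mul_one, mul_zero, Finset.sum_ite_eq', Finset.mem_univ,
    if_true]
  split_ifs with h
  · rw [h]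
  · rfl

theorem ONFam.expHam_zero (hv : ONFam v) (ε : Fin n → ℝ) : expHam ε v 0 = 1 := by
  have h := hv.conjTranspose_colMat_mul_expHam_mul_colMat ε 0
  simp only [zero_mul, Real.exp_zero, Complex.ofReal_one, diagonal_one] at h
  have hP := hv.colMat_mul_conjTranspose_colMat
  calc expHam ε v 0 = colMat v * ((colMat v)ᴴ * expHam ε v 0 * colMat v) * (colMat v)ᴴ := by
        simp only [← Matrix.mul_assoc, hP, Matrix.one_mul]
        rw [Matrix.mul_assoc, hP, Matrix.mul_one]
    _ = 1 := by rw [h, Matrix.mul_one, hP]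

theorem ONFam.sum_matElem_mul_exp_eq_trace (hv : ONFam v) (ε : Fin n → ℝ)
    (A B C : Matrix (Fin n) (Fin n) ℂ) (s t τ : ℝ) :
    ∑ i, ∑ j, ∑ k, matElem A (v i) (v j) * matElem B (v j) (v k) * matElem C (v k) (v i)
        * ((Real.exp (s * ε i) * Real.exp (t * ε j) * Real.exp (τ * ε k) : ℝ) : ℂ)
      = (expHam ε v s * A * expHam ε v t * B * expHam ε v τ * C).trace := by
  have hP : ∀ X, colMat v * ((colMat v)ᴴ * X) = X := fun X => by
    rw [← Matrix.mul_assoc, hv.colMat_mul_conjTranspose_colMat, Matrix.one_mul]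
  simp only [← conjTranspose_colMat_mul_mul_colMat, Complex.ofReal_mul,
    ← trace_diagonal_mul_diagonal_mul_diagonal_mul_eq_sum,
    ← hv.conjTranspose_colMat_mul_expHam_mul_colMat]
  simp only [Matrix.mul_assoc, hP]
  rw [Matrix.trace_mul_comm]
  simp only [Matrix.mul_assoc, hv.colMat_mul_conjTranspose_colMat, Matrix.mul_one]

theorem expUtil_expUtility_half_eq (hv : ONFam v) (ε : Fin n → ℝ) (r : ℝ)
    (ρ : Matrix (Fin n) (Fin n) ℂ) {U : Matrix (Fin n) (Fin n) ℂ}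
    (hU : U ∈ unitaryGroup (Fin n) ℂ) :
    expUtil (expUtility r) (1/2) ε v ρ U
      = (ρ.trace.re
          - (expHam ε v r * U * (expHam ε v (-r/2) * ρ * expHam ε v (-r/2)) * Uᴴ).trace.re)
        / r := by
  have hw : ∀ i j k, expUtility r (1/2 * ε i + (1 - 1/2) * ε j - ε k)
      = (1 - Real.exp (-r/2 * ε i) * Real.exp (-r/2 * ε j) * Real.exp (r * ε k)) / r := by
    intro i j k
    rw [expUtility, ← Real.exp_add, ← Real.exp_add]
    ring_nf
  have hUU : Uᴴ * U = 1 := by simpa [star_eq_conjTranspose] using mem_unitaryGroup_iff'.mp hU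
  have htrace := hv.sum_matElem_mul_exp_eq_trace ε ρ Uᴴ U 0 0 0
  simp only [zero_mul, Real.exp_zero, mul_one, Complex.ofReal_one, hv.expHam_zero,
    Matrix.one_mul, Matrix.mul_assoc, hUU] at htrace
  have hcyc : (expHam ε v r * U * (expHam ε v (-r/2) * ρ * expHam ε v (-r/2)) * Uᴴ).trace
      = (expHam ε v (-r/2) * ρ * expHam ε v (-r/2) * Uᴴ * expHam ε v r * U).trace := by
    rw [Matrix.mul_assoc (expHam ε v r * U), Matrix.trace_mul_comm]
    simp only [Matrix.mul_assoc]
  calc expUtil (expUtility r) (1/2) ε v ρ U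
      = ∑ i, ∑ j, ∑ k,
          ((matElem ρ (v i) (v j) * matElem Uᴴ (v j) (v k) * matElem U (v k) (v i)).re
            - (matElem ρ (v i) (v j) * matElem Uᴴ (v j) (v k) * matElem U (v k) (v i)
              * ((Real.exp (-r/2 * ε i) * Real.exp (-r/2 * ε j) * Real.exp (r * ε k) : ℝ) : ℂ)).re)
            / r := by
        simp only [expUtil, hw, Complex.re_mul_ofReal]
        exact Finset.sum_congr rfl fun _ _ => Finset.sum_congr rfl fun _ _ =>
          Finset.sum_congr rfl fun _ _ => by ring
    _ = _ := by
        rw [hcyc, ← hv.sum_matElem_mul_exp_eq_trace, ← htrace]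
        simp only [Complex.re_sum, Finset.sum_div, sub_div, Finset.sum_sub_distrib]

end Hamiltonian

theorem stmt0_general {dS : ℕ} (r : ℝ)
    (ε : Fin dS → ℝ) (hε : StrictMono ε)
    (v : Fin dS → Fin dS → ℂ) (hv : ONFam v)
    (ρ : Matrix (Fin dS) (Fin dS) ℂ) (hρ : IsDensity ρ)
    (uvals : Fin dS → ℝ) (φ : Fin dS → Fin dS → ℂ)
    (hφ : ONFam φ) (hdec : Antitone uvals)
    (hspec : expHam ε v (-r/2) * ρ * expHam ε v (-r/2)
      = ∑ k, (uvals k : ℂ) • ketbra (φ k) (φ k)) :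
    IsGreatest
      {x : ℝ | ∃ U ∈ Matrix.unitaryGroup (Fin dS) ℂ,
        x = expUtil (expUtility r) (1/2) ε v ρ U}
      ((1/r) * (1 - ∑ k, uvals k * Real.exp (r * ε k))) := by
  set f : Fin dS → ℝ := fun k => Real.exp (r * ε k) / r
  have hval : ∀ U ∈ unitaryGroup (Fin dS) ℂ, expUtil (expUtility r) (1/2) ε v ρ U
      = 1/r - ∑ k, ∑ l, f k * uvals l * Complex.normSq (matElem U (v k) (φ l)) := by
    intro U hU
    rw [expUtil_expUtility_half_eq hv ε r ρ hU, hspec, hρ.2, expHam,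
      trace_sum_ketbra_mul_mul_sum_ketbra_mul_conjTranspose, Complex.one_re, Complex.ofReal_re,
      sub_div]
    simp only [Finset.sum_div, f]
    congr 1
    exact Finset.sum_congr rfl fun _ _ => Finset.sum_congr rfl fun _ _ => by ring
  have hmax : (1/r) * (1 - ∑ k, uvals k * Real.exp (r * ε k)) = 1/r - ∑ k, f k * uvals k := by
    simp only [f, mul_sub, mul_one, Finset.mul_sum]
    congr 1
    exact Finset.sum_congr rfl fun _ _ => by ring
  have hU₀ : colMat v * (colMat φ)ᴴ ∈ unitaryGroup (Fin dS) ℂ :=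
    mul_mem hv.colMat_mem_unitaryGroup (Unitary.star_mem hφ.colMat_mem_unitaryGroup)
  refine ⟨⟨_, hU₀, ?_⟩, ?_⟩
  · rw [hval _ hU₀, hmax]
    simp [hv.matElem_colMat_mul_conjTranspose_colMat hφ, one_apply]
  · rintro _ ⟨U, hU, rfl⟩
    rw [hval U hU, hmax]
    have hf : Monotone f := (Real.monotone_exp_mul_div r).comp hε.monotone
    linarith [hv.sum_mul_le_sum_sum_mul_normSq_matElem hφ hU (hf.antivary hdec)]

/-- For the exponential utility with `r ≠ 0` and `q = 1/2`, the optimal expected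
utility of a density matrix `ρ` equals `(1/r)(1 - ∑ₖ uₖ e^{r εₖ})`, where the `uₖ` are the
eigenvalues of `e^{-rH_S/2} ρ e^{-rH_S/2}` in decreasing order. -/
theorem stmt0 {dS : ℕ} (r : ℝ) (hr : r ≠ 0)
    (ε : Fin dS → ℝ) (hε : StrictMono ε)
    (v : Fin dS → Fin dS → ℂ) (hv : ONFam v)
    (ρ : Matrix (Fin dS) (Fin dS) ℂ) (hρ : IsDensity ρ)
    (uvals : Fin dS → ℝ) (φ : Fin dS → Fin dS → ℂ)
    (hφ : ONFam φ) (hdec : Antitone uvals)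
    (hspec : expHam ε v (-r/2) * ρ * expHam ε v (-r/2)
      = ∑ k, (uvals k : ℂ) • ketbra (φ k) (φ k)) :
    IsGreatest
      {x : ℝ | ∃ U ∈ Matrix.unitaryGroup (Fin dS) ℂ,
        x = expUtil (expUtility r) (1/2) ε v ρ U}
      ((1/r) * (1 - ∑ k, uvals k * Real.exp (r * ε k))) :=
  stmt0_general r ε hε v hv ρ hρ uvals φ hφ hdec hspec

end Daemonic
end
end

section
/- (Lemma 1) Fix the exponential utility u(w) = (1 − e^{−rw})/r with r ≠ 0 and q = 1/2. Let ρ_SA be a bipartite density matrix on ℂ^{d_S} ⊗ ℂ^{d_A} with reduced state ρ_S = Tr_A(ρ_SA), let {|u_k⟩} be an orthonormal eigenbasis of e^{−rH_S/2} ρ_S e^{−rH_S/2} with eigenvalues in decreasing order, and set H̃_S = Σ_k (e^{r ε_k}/r) |u_k⟩⟨u_k| (whose eigenvalues e^{r ε_k}/r are strictly increasing in k). Then for every orthonormal basis {|a⟩} of ℂ^{d_A}, the daemonic gain satisfies 𝓤_{{Π_a}}(ρ_SA) − 𝓤(ρ_S) = Σ_{a : p_a>0} p_a ℰ_{H̃_S}(e^{−rH_S/2}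 ρ_{S|a} e^{−rH_S/2}) ≥ 0. -/
/-!
For the exponential utility and `q = 1/2` the utility of the work value factorises,
`u(ε_i/2 + ε_j/2 - ε_k) = 1/r - e^{-rε_i/2} e^{-rε_j/2} e^{rε_k}/r`, so the expected utility
of `ρ` under `U` is `Tr ρ / r - Tr(G U σ U†)` with `G = e^{rH_S}/r` and
`σ = e^{-rH_S/2} ρ e^{-rH_S/2}`. Hence `𝓤(ρ) = Tr ρ / r - min_U Tr(G U σ U†)`, and this passive
energy depends only on the spectrum of `G`, so `G` may be replaced by `H̃_S`. The state `σ_S`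
built from `ρ_S` is diagonal in the eigenbasis of `H̃_S` with eigenvalues ordered oppositely, so
it is passive: for unitary `W` the matrix `|W_kl|²` is doubly stochastic, and Birkhoff's theorem
reduces the claim to the rearrangement inequality. Since `ρ_S = ∑_a p_a ρ_{S|a}` and
`σ ↦ Tr(H̃_S σ)` is linear, the gain becomes
`∑_a p_a (Tr(H̃_S σ_a) - min_U Tr(H̃_S U σ_a U†)) = ∑_a p_a ℰ_{H̃_S}(σ_a) ≥ 0`.
-/

open Matrix BigOperators Finset Kronecker
open scoped ComplexOrder

noncomputable section

namespace Daemonic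

open scoped Classical

section Rearrangement

variable {ι : Type*} [Fintype ι] [DecidableEq ι]

theorem dotProduct_le_dotProduct_mulVec_of_antivary {h s : ι → ℝ} (hhs : Antivary h s)
    {D : Matrix ι ι ℝ} (hD : D ∈ doublyStochastic ℝ ι) : h ⬝ᵥ s ≤ h ⬝ᵥ (D *ᵥ s) := by
  rw [← SetLike.mem_coe, doublyStochastic_eq_convexHull_permMatrix] at hD
  change D ∈ {D : Matrix ι ι ℝ | h ⬝ᵥ s ≤ h ⬝ᵥ (D *ᵥ s)}
  refine convexHull_min ?_ (convex_halfSpace_ge ?_ _) hD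
  · rintro _ ⟨σ, rfl⟩
    simpa [permMatrix_mulVec, dotProduct] using hhs.sum_smul_le_sum_smul_comp_perm (σ := σ)
  · exact ⟨fun D E => by simp [add_mulVec], fun c D => by simp [smul_mulVec]⟩

theorem normSq_mem_doublyStochastic {U : Matrix ι ι ℂ} (hU : U ∈ unitaryGroup ι ℂ) :
    (of fun i j => Complex.normSq (U i j)) ∈ doublyStochastic ℝ ι := by
  have hrow (i : ι) : ∑ j, Complex.normSq (U i j) = 1 := by
    have := congr_fun₂ (mem_unitaryGroup_iff.mp hU) i i
    simp only [mul_apply, star_apply, one_apply_eq, Complex.star_def, Complex.mul_conj] at this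
    exact_mod_cast this
  have hcol (j : ι) : ∑ i, Complex.normSq (U i j) = 1 := by
    have := congr_fun₂ (mem_unitaryGroup_iff'.mp hU) j j
    simp only [mul_apply, star_apply, one_apply_eq, Complex.star_def, mul_comm (starRingEnd ℂ _),
      Complex.mul_conj] at this
    exact_mod_cast this
  refine mem_doublyStochastic.mpr ⟨fun i j => Complex.normSq_nonneg _, ?_, ?_⟩
  · ext i; simp [mulVec, dotProduct, hrow]
  · ext j; simp [vecMul, dotProduct, hcol]

theorem re_trace_diagonal_mul_mul_diagonal_mul_conjTranspose (h s : ι → ℝ) (U : Matrix ι ι ℂ) :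
    (diagonal (fun i => (h i : ℂ)) * U * diagonal (fun i => (s i : ℂ)) * Uᴴ).trace.re
      = h ⬝ᵥ ((of fun i j => Complex.normSq (U i j)) *ᵥ s) := by
  rw [Matrix.mul_assoc, Matrix.mul_assoc, ← Matrix.mul_assoc U, trace, Complex.re_sum]
  refine Finset.sum_congr rfl fun i _ => ?_
  rw [diag_apply, diagonal_mul, mul_apply, Finset.mul_sum, Complex.re_sum, mulVec, dotProduct,
    Finset.mul_sum]
  refine Finset.sum_congr rfl fun j _ => ?_
  rw [mul_diagonal, conjTranspose_apply, of_apply, Complex.star_def, mul_right_comm (U i j),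
    Complex.mul_conj]
  simp only [← Complex.ofReal_mul, Complex.ofReal_re]

theorem dotProduct_le_re_trace_of_antivary {h s : ι → ℝ} (hhs : Antivary h s)
    {U : Matrix ι ι ℂ} (hU : U ∈ unitaryGroup ι ℂ) :
    h ⬝ᵥ s ≤ (diagonal (fun i => (h i : ℂ)) * U * diagonal (fun i => (s i : ℂ)) * Uᴴ).trace.re := by
  rw [re_trace_diagonal_mul_mul_diagonal_mul_conjTranspose]
  exact dotProduct_le_dotProduct_mulVec_of_antivary hhs (normSq_mem_doublyStochastic hU)

end Rearrangement

section PassiveEnergy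

variable {m : Type*} [Fintype m] [DecidableEq m]

instance : CompactSpace (unitaryGroup m ℂ) := by
  have hK : IsCompact
      (Set.univ.pi fun _ : m => Set.univ.pi fun _ : m => Metric.closedBall (0 : ℂ) 1) :=
    isCompact_univ_pi fun _ => isCompact_univ_pi fun _ => isCompact_closedBall 0 1
  refine isCompact_iff_compactSpace.mp <| IsCompact.of_isClosed_subset (X := Matrix m m ℂ) hK
    isClosed_unitary fun U hU i _ j _ => ?_
  simpa using entry_norm_bound_of_unitary hU i j

def passiveEnergy (H σ : Matrix m m ℂ) : ℝ :=
  ⨅ U : unitaryGroup m ℂ, (H * ((U : Matrix m m ℂ) * σ * (U : Matrix m m ℂ)ᴴ)).trace.re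

theorem bddBelow_range_re_trace_conj (H σ : Matrix m m ℂ) :
    BddBelow (Set.range fun U : unitaryGroup m ℂ =>
      (H * ((U : Matrix m m ℂ) * σ * (U : Matrix m m ℂ)ᴴ)).trace.re) :=
  (isCompact_range (by fun_prop)).bddBelow

theorem passiveEnergy_le_re_trace (H σ : Matrix m m ℂ) : passiveEnergy H σ ≤ (H * σ).trace.re := by
  simpa [passiveEnergy] using ciInf_le (bddBelow_range_re_trace_conj H σ) 1

theorem passiveEnergy_conj_left (H σ : Matrix m m ℂ) {V : Matrix m m ℂ}
    (hV : V ∈ unitaryGroup m ℂ) : passiveEnergy (V * H * Vᴴ) σ = passiveEnergy H σ := by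
  symm
  rw [passiveEnergy, passiveEnergy, ← (Equiv.mulLeft (⟨V, hV⟩ : unitaryGroup m ℂ)⁻¹).iInf_comp]
  refine iInf_congr fun U => ?_
  simp only [Equiv.coe_mulLeft, Submonoid.coe_mul, conjTranspose_mul, UnitaryGroup.inv_val,
    star_eq_conjTranspose, conjTranspose_conjTranspose]
  rw [Matrix.mul_assoc V, Matrix.mul_assoc V, trace_mul_comm V]
  simp only [Matrix.mul_assoc]

theorem passiveEnergy_conj_right (H σ : Matrix m m ℂ) {V : Matrix m m ℂ}
    (hV : V ∈ unitaryGroup m ℂ) : passiveEnergy H (V * σ * Vᴴ) = passiveEnergy H σ := by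
  symm
  rw [passiveEnergy, passiveEnergy, ← (Equiv.mulRight (⟨V, hV⟩ : unitaryGroup m ℂ)).iInf_comp]
  refine iInf_congr fun U => ?_
  simp only [Equiv.coe_mulRight, Submonoid.coe_mul, conjTranspose_mul, Matrix.mul_assoc]

theorem passiveEnergy_diagonal_of_antivary {h s : m → ℝ} (hhs : Antivary h s) :
    passiveEnergy (diagonal fun i => (h i : ℂ)) (diagonal fun i => (s i : ℂ)) = h ⬝ᵥ s := by
  refine le_antisymm ((passiveEnergy_le_re_trace _ _).trans_eq ?_) (le_ciInf fun U => ?_)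
  · simp [diagonal_mul_diagonal, trace_diagonal, dotProduct]
  · simpa [Matrix.mul_assoc] using dotProduct_le_re_trace_of_antivary hhs U.2

end PassiveEnergy

theorem ciSup_const_sub {α ι : Type*} [ConditionallyCompleteLattice α] [AddCommGroup α]
    [AddLeftMono α] [Nonempty ι] {f : ι → α} (hf : BddBelow (Set.range f)) (c : α) :
    ⨆ i, (c - f i) = c - ⨅ i, f i :=
  ((OrderIso.subLeft c).map_ciInf hf).symm

theorem ergotropyH_eq_sub_passiveEnergy {n : ℕ} (H σ : Matrix (Fin n) (Fin n) ℂ) :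
    ergotropyH H σ = (H * σ).trace.re - passiveEnergy H σ := by
  simp only [ergotropyH, passiveEnergy, Complex.sub_re]
  exact ciSup_const_sub (bddBelow_range_re_trace_conj H σ) _

theorem ergotropyH_nonneg {n : ℕ} (H σ : Matrix (Fin n) (Fin n) ℂ) : 0 ≤ ergotropyH H σ := by
  rw [ergotropyH_eq_sub_passiveEnergy]
  exact sub_nonneg.mpr (passiveEnergy_le_re_trace H σ)

section Basis

variable {m : Type*} [Fintype m]

def basisMatrix (v : m → m → ℂ) : Matrix m m ℂ :=
  of fun x i => v i x

theorem basisMatrix_mem_unitaryGroup [DecidableEq m] {v : m → m → ℂ} (hv : ONFam v) :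
    basisMatrix v ∈ unitaryGroup m ℂ := by
  rw [mem_unitaryGroup_iff', star_eq_conjTranspose]
  ext i j
  simpa [mul_apply, basisMatrix, dotProduct, one_apply] using hv i j

theorem sum_smul_ketbra_eq_basisMatrix_mul [DecidableEq m] (v : m → m → ℂ) (c : m → ℂ) :
    ∑ k, c k • ketbra (v k) (v k) = basisMatrix v * diagonal c * (basisMatrix v)ᴴ := by
  ext x y
  simp only [Matrix.sum_apply, Matrix.smul_apply, ketbra, vecMulVec_apply, mul_apply, ↓mul_diagonal,
    basisMatrix, conjTranspose_apply, of_apply, Pi.star_apply, smul_eq_mul]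
  exact Finset.sum_congr rfl fun k _ => by ring

theorem sum_ketbra_self [DecidableEq m] {v : m → m → ℂ} (hv : ONFam v) :
    ∑ k, ketbra (v k) (v k) = 1 := by
  have h := sum_smul_ketbra_eq_basisMatrix_mul v fun _ => 1
  simp only [one_smul, diagonal_one, Matrix.mul_one] at h
  rw [h, ← star_eq_conjTranspose]
  exact mem_unitaryGroup_iff.mp (basisMatrix_mem_unitaryGroup hv)

theorem matElem_eq_conjTranspose_mul_mul_apply (M : Matrix m m ℂ) (v : m → m → ℂ) (i j : m) :
    matElem M (v i) (v j) = ((basisMatrix v)ᴴ * M * basisMatrix v) i j := by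
  simp only [matElem, dotProduct, mulVec, mul_apply, basisMatrix, conjTranspose_apply, of_apply,
    Pi.star_apply, Finset.mul_sum, Finset.sum_mul]
  rw [Finset.sum_comm]
  exact Finset.sum_congr rfl fun _ _ => Finset.sum_congr rfl fun _ _ => by ring

theorem sum_mul_mul_mul_eq_trace_diagonal_mul [DecidableEq m] (P Q R : Matrix m m ℂ)
    (a b c : m → ℂ) :
    ∑ i, ∑ j, ∑ k, P i j * Q j k * R k i * (a i * b j * c k)
      = (diagonal a * P * diagonal b * Q * diagonal c * R).trace := by
  simp only [trace, diag_apply, ↓mul_diagonal, ↓diagonal_mul, mul_apply, Finset.sum_mul]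
  rw [Finset.sum_congr rfl fun i _ => Finset.sum_comm]
  exact Finset.sum_congr rfl fun _ _ => Finset.sum_congr rfl fun _ _ =>
    Finset.sum_congr rfl fun _ _ => by ring

theorem sum_matElem_mul_eq_trace [DecidableEq m] (v : m → m → ℂ) (ρ U : Matrix m m ℂ)
    (a b c : m → ℂ) :
    ∑ i, ∑ j, ∑ k, matElem ρ (v i) (v j) * matElem Uᴴ (v j) (v k) * matElem U (v k) (v i) *
        (a i * b j * c k)
      = ((∑ k, a k • ketbra (v k) (v k)) * ρ * (∑ k, b k • ketbra (v k) (v k)) * Uᴴ *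
          (∑ k, c k • ketbra (v k) (v k)) * U).trace := by
  simp only [matElem_eq_conjTranspose_mul_mul_apply, sum_mul_mul_mul_eq_trace_diagonal_mul,
    sum_smul_ketbra_eq_basisMatrix_mul, Matrix.mul_assoc]
  rw [trace_mul_comm (basisMatrix v)]
  simp only [Matrix.mul_assoc]

end Basis

section Spectral

variable {m : Type*} [Fintype m] [DecidableEq m]

theorem passiveEnergy_sum_smul_ketbra_congr {v φ : m → m → ℂ} (hv : ONFam v) (hφ : ONFam φ)
    (c : m → ℂ) (σ : Matrix m m ℂ) :
    passiveEnergy (∑ k, c k • ketbra (v k) (v k)) σ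
      = passiveEnergy (∑ k, c k • ketbra (φ k) (φ k)) σ := by
  rw [sum_smul_ketbra_eq_basisMatrix_mul, sum_smul_ketbra_eq_basisMatrix_mul,
    passiveEnergy_conj_left _ _ (basisMatrix_mem_unitaryGroup hv),
    passiveEnergy_conj_left _ _ (basisMatrix_mem_unitaryGroup hφ)]

theorem passiveEnergy_eq_re_trace_of_antivary {φ : m → m → ℂ} (hφ : ONFam φ) {h s : m → ℝ}
    (hhs : Antivary h s) :
    passiveEnergy (∑ k, (h k : ℂ) • ketbra (φ k) (φ k)) (∑ k, (s k : ℂ) • ketbra (φ k) (φ k))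
      = ((∑ k, (h k : ℂ) • ketbra (φ k) (φ k)) *
          (∑ k, (s k : ℂ) • ketbra (φ k) (φ k))).trace.re := by
  have hΦ := basisMatrix_mem_unitaryGroup hφ
  have hΦΦ : (basisMatrix φ)ᴴ * basisMatrix φ = 1 := by
    rw [← star_eq_conjTranspose]; exact mem_unitaryGroup_iff'.mp hΦ
  rw [sum_smul_ketbra_eq_basisMatrix_mul φ fun k => (h k : ℂ),
    sum_smul_ketbra_eq_basisMatrix_mul φ fun k => (s k : ℂ),
    passiveEnergy_conj_left _ _ hΦ, passiveEnergy_conj_right _ _ hΦ,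
    passiveEnergy_diagonal_of_antivary hhs, Matrix.mul_assoc, trace_mul_comm]
  simp only [Matrix.mul_assoc, ← Matrix.mul_assoc _ (basisMatrix φ), hΦΦ, Matrix.one_mul]
  simp only [diagonal_mul_diagonal, trace_diagonal, Complex.re_sum, ← Complex.ofReal_mul,
    Complex.ofReal_re, dotProduct]
  exact Finset.sum_congr rfl fun _ _ => mul_comm _ _

end Spectral

section ExpUtility

variable {n : ℕ}

theorem expUtility_half (r x y z : ℝ) :
    expUtility r (1/2 * x + (1 - 1/2) * y - z)
      = 1 / r - Real.exp (-r/2 * x) * Real.exp (-r/2 * y) * (Real.exp (r * z) / r) := by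
  rw [expUtility, mul_div_assoc', ← Real.exp_add, ← Real.exp_add, sub_div]
  ring_nf

theorem expUtil_expUtility_half (r : ℝ) (ε : Fin n → ℝ) {v : Fin n → Fin n → ℂ} (hv : ONFam v)
    (ρ : Matrix (Fin n) (Fin n) ℂ) {U : Matrix (Fin n) (Fin n) ℂ}
    (hU : U ∈ unitaryGroup (Fin n) ℂ) :
    expUtil (expUtility r) (1/2) ε v ρ U
      = ρ.trace.re / r - ((∑ k, ((Real.exp (r * ε k) / r : ℝ) : ℂ) • ketbra (v k) (v k)) *
          (U * (expHam ε v (-r/2) * ρ * expHam ε v (-r/2)) * Uᴴ)).trace.re := by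
  set M : Fin n → Fin n → Fin n → ℂ := fun i j k =>
    matElem ρ (v i) (v j) * matElem Uᴴ (v j) (v k) * matElem U (v k) (v i)
  set e : Fin n → ℂ := fun k => (Real.exp (-r/2 * ε k) : ℂ)
  set g : Fin n → ℂ := fun k => ((Real.exp (r * ε k) / r : ℝ) : ℂ)
  have hconst := sum_matElem_mul_eq_trace v ρ U (fun _ => 1) (fun _ => 1) (fun _ => 1)
  have hexp : ∑ i, ∑ j, ∑ k, M i j k * (e i * e j * g k) = (expHam ε v (-r/2) * ρ *
      expHam ε v (-r/2) * Uᴴ * (∑ k, g k • ketbra (v k) (v k)) * U).trace :=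
    sum_matElem_mul_eq_trace v ρ U e e g
  have hUU : Uᴴ * U = 1 := by rw [← star_eq_conjTranspose]; exact mem_unitaryGroup_iff'.mp hU
  simp only [one_smul, sum_ketbra_self hv, Matrix.one_mul, Matrix.mul_assoc, hUU,
    mul_one] at hconst
  have hsum : ∑ i, ∑ j, ∑ k, M i j k * (expUtility r (1/2 * ε i + (1 - 1/2) * ε j - ε k) : ℂ)
      = ((1 / r : ℝ) : ℂ) * ρ.trace - ((∑ k, g k • ketbra (v k) (v k)) *
          (U * (expHam ε v (-r/2) * ρ * expHam ε v (-r/2)) * Uᴴ)).trace := by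
    simp only [expUtility_half, Complex.ofReal_sub, Complex.ofReal_mul]
    have hcyc (A B : Matrix (Fin n) (Fin n) ℂ) :
        (B * (U * A * Uᴴ)).trace = (A * Uᴴ * B * U).trace := by
      rw [trace_mul_comm, ← trace_mul_comm U]; simp only [Matrix.mul_assoc]
    rw [← hconst, hcyc, ← hexp, Finset.mul_sum]
    simp only [Finset.mul_sum, ← Finset.sum_sub_distrib]
    exact Finset.sum_congr rfl fun i _ => Finset.sum_congr rfl fun j _ =>
      Finset.sum_congr rfl fun k _ => by ring
  simp only [expUtil, ← Complex.re_mul_ofReal, ← Complex.re_sum]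
  refine (congrArg Complex.re hsum).trans ?_
  rw [Complex.sub_re, Complex.re_ofReal_mul, one_div_mul_eq_div]

theorem optUtil_expUtility_half (r : ℝ) (ε : Fin n → ℝ) {v φ : Fin n → Fin n → ℂ}
    (hv : ONFam v) (hφ : ONFam φ) (ρ : Matrix (Fin n) (Fin n) ℂ) :
    optUtil (expUtility r) (1/2) ε v ρ
      = ρ.trace.re / r - passiveEnergy (∑ k, ((Real.exp (r * ε k) / r : ℝ) : ℂ) •
          ketbra (φ k) (φ k)) (expHam ε v (-r/2) * ρ * expHam ε v (-r/2)) := by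
  rw [← passiveEnergy_sum_smul_ketbra_congr hv hφ, passiveEnergy, ← ciSup_const_sub
    (bddBelow_range_re_trace_conj _ _)]
  exact iSup_congr fun U => expUtil_expUtility_half r ε hv ρ U.2

end ExpUtility

theorem monotone_exp_mul_div (r : ℝ) : Monotone fun x => Real.exp (r * x) / r := by
  intro x y hxy
  rcases lt_trichotomy r 0 with hr | rfl | hr
  · exact div_le_div_of_nonpos_of_le hr.le
      (Real.exp_le_exp.mpr (mul_le_mul_of_nonpos_left hxy hr.le))
  · simp -- `x / 0 = 0`: at `r = 0` the function is constantly `0`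
  · exact div_le_div_of_nonneg_right
      (Real.exp_le_exp.mpr (mul_le_mul_of_nonneg_left hxy hr.le)) hr.le

section Bipartite

variable {dS dA : ℕ}

def idTensorKet (dS : ℕ) (x : Fin dA → ℂ) : Matrix (Fin dS × Fin dA) (Fin dS) ℂ :=
  of fun p i => if p.1 = i then x p.2 else 0

theorem condUnnorm_eq_conjTranspose_mul_mul (w : Fin dA → Fin dA → ℂ)
    (ρSA : Matrix (Fin dS × Fin dA) (Fin dS × Fin dA) ℂ) (a : Fin dA) :
    condUnnorm w ρSA a = (idTensorKet dS (w a))ᴴ * ρSA * idTensorKet dS (w a) := by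
  ext i j
  simp only [condUnnorm, RCLike.star_def, of_apply, idTensorKet, mul_apply, conjTranspose_apply,
    apply_ite (starRingEnd ℂ), map_zero, ite_mul, zero_mul, Fintype.sum_prod_type, sum_ite_irrel,
    sum_const_zero, sum_ite_eq', mem_univ, ↓reduceIte, mul_ite, sum_mul, mul_zero]
  rw [Finset.sum_comm]
  exact Finset.sum_congr rfl fun _ _ => Finset.sum_congr rfl fun _ _ => by ring

theorem condUnnorm_posSemidef (w : Fin dA → Fin dA → ℂ)
    {ρSA : Matrix (Fin dS × Fin dA) (Fin dS × Fin dA) ℂ} (hρ : ρSA.PosSemidef) (a : Fin dA) :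
    (condUnnorm w ρSA a).PosSemidef := by
  rw [condUnnorm_eq_conjTranspose_mul_mul]
  exact hρ.conjTranspose_mul_mul_same _

theorem trace_condUnnorm (w : Fin dA → Fin dA → ℂ)
    {ρSA : Matrix (Fin dS × Fin dA) (Fin dS × Fin dA) ℂ} (hρ : ρSA.PosSemidef) (a : Fin dA) :
    (condUnnorm w ρSA a).trace = prob w ρSA a :=
  Complex.eq_re_of_ofReal_le <| by
    rw [Complex.ofReal_zero]; exact (condUnnorm_posSemidef w hρ a).trace_nonneg

theorem prob_nonneg (w : Fin dA → Fin dA → ℂ)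
    {ρSA : Matrix (Fin dS × Fin dA) (Fin dS × Fin dA) ℂ} (hρ : ρSA.PosSemidef) (a : Fin dA) :
    0 ≤ prob w ρSA a :=
  (Complex.nonneg_iff.mp (condUnnorm_posSemidef w hρ a).trace_nonneg).1

theorem prob_smul_condState (w : Fin dA → Fin dA → ℂ)
    {ρSA : Matrix (Fin dS × Fin dA) (Fin dS × Fin dA) ℂ} (hρ : ρSA.PosSemidef) (a : Fin dA) :
    (prob w ρSA a : ℂ) • condState w ρSA a = condUnnorm w ρSA a := by
  by_cases hp : prob w ρSA a = 0
  · -- `condState` is the junk value `0⁻¹ • _ = 0`, and positivity forces `condUnnorm = 0`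
    rw [hp, Complex.ofReal_zero, zero_smul, eq_comm,
      ← (condUnnorm_posSemidef w hρ a).trace_eq_zero_iff, trace_condUnnorm w hρ, hp,
      Complex.ofReal_zero]
  · rw [condState, smul_smul, mul_inv_cancel₀ (Complex.ofReal_ne_zero.mpr hp), one_smul]

theorem sum_condUnnorm {w : Fin dA → Fin dA → ℂ} (hw : ONFam w)
    (ρSA : Matrix (Fin dS × Fin dA) (Fin dS × Fin dA) ℂ) :
    ∑ a, condUnnorm w ρSA a = ptraceA ρSA := by
  have hW : basisMatrix w * (basisMatrix w)ᴴ = 1 := by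
    rw [← star_eq_conjTranspose]; exact mem_unitaryGroup_iff.mp (basisMatrix_mem_unitaryGroup hw)
  ext i j
  simp only [condUnnorm, ptraceA, Matrix.sum_apply, of_apply]
  rw [Finset.sum_comm]
  refine Finset.sum_congr rfl fun c _ => ?_
  rw [Finset.sum_comm]
  have hcomp (y : Fin dA) : ∑ x, w x y * star (w x c) = (1 : Matrix (Fin dA) (Fin dA) ℂ) y c := by
    rw [← hW, mul_apply]; rfl
  simp only [← Finset.mul_sum, hcomp, one_apply, mul_ite, mul_one, mul_zero, Finset.sum_ite_eq',
    Finset.mem_univ, if_true]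

theorem sum_prob_smul_condState {w : Fin dA → Fin dA → ℂ} (hw : ONFam w)
    {ρSA : Matrix (Fin dS × Fin dA) (Fin dS × Fin dA) ℂ} (hρ : ρSA.PosSemidef) :
    ∑ a, (prob w ρSA a : ℂ) • condState w ρSA a = ptraceA ρSA := by
  simp only [prob_smul_condState w hρ, sum_condUnnorm hw]

end Bipartite

theorem stmt1_general {dS dA : ℕ} (r : ℝ)
    (ε : Fin dS → ℝ) (hε : StrictMono ε)
    (v : Fin dS → Fin dS → ℂ) (hv : ONFam v)
    (ρSA : Matrix (Fin dS × Fin dA) (Fin dS × Fin dA) ℂ) (hρSA : IsDensity ρSA)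
    (uvals : Fin dS → ℝ) (φ : Fin dS → Fin dS → ℂ)
    (hφ : ONFam φ) (hdec : Antitone uvals)
    (hspec : expHam ε v (-r/2) * ptraceA ρSA * expHam ε v (-r/2)
      = ∑ k, (uvals k : ℂ) • ketbra (φ k) (φ k))
    (w : Fin dA → Fin dA → ℂ) (hw : ONFam w) :
    daemonicUtil (expUtility r) (1/2) ε v w ρSA
        - optUtil (expUtility r) (1/2) ε v (ptraceA ρSA)
      = ∑ a ∈ Finset.univ.filter (fun a => 0 < prob w ρSA a),
          prob w ρSA a *
            ergotropyH (∑ k, ((Real.exp (r * ε k) / r : ℝ) : ℂ) • ketbra (φ k) (φ k))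
              (expHam ε v (-r/2) * condState w ρSA a * expHam ε v (-r/2)) ∧
    0 ≤ daemonicUtil (expUtility r) (1/2) ε v w ρSA
        - optUtil (expUtility r) (1/2) ε v (ptraceA ρSA) := by
  set E := expHam ε v (-r/2)
  set H := ∑ k, ((Real.exp (r * ε k) / r : ℝ) : ℂ) • ketbra (φ k) (φ k)
  have hp (a : Fin dA) : 0 ≤ prob w ρSA a := prob_nonneg w hρSA.1 a
  have hopt (σ : Matrix (Fin dS) (Fin dS) ℂ) : optUtil (expUtility r) (1/2) ε v σ
      = σ.trace.re / r - passiveEnergy H (E * σ * E) := optUtil_expUtility_half r ε hv hφ σ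
  have hpassive :
      passiveEnergy H (E * ptraceA ρSA * E) = (H * (E * ptraceA ρSA * E)).trace.re := by
    rw [hspec]
    exact passiveEnergy_eq_re_trace_of_antivary hφ
      (((monotone_exp_mul_div r).comp hε.monotone).antivary hdec)
  have hgain : daemonicUtil (expUtility r) (1/2) ε v w ρSA
      - optUtil (expUtility r) (1/2) ε v (ptraceA ρSA)
      = ∑ a, prob w ρSA a * ergotropyH H (E * condState w ρSA a * E) := by
    simp only [daemonicUtil, hopt, hpassive, ergotropyH_eq_sub_passiveEnergy]
    rw [← sum_prob_smul_condState hw hρSA.1]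
    simp only [Matrix.mul_sum, Matrix.sum_mul, Matrix.mul_smul, Matrix.smul_mul, trace_sum,
      trace_smul, smul_eq_mul, Complex.re_sum, Complex.re_ofReal_mul]
    simp only [mul_sub, Finset.sum_sub_distrib, Finset.sum_div, mul_div_assoc]
    ring
  have hfilter : ∑ a ∈ Finset.univ.filter (fun a => 0 < prob w ρSA a),
        prob w ρSA a * ergotropyH H (E * condState w ρSA a * E)
      = ∑ a, prob w ρSA a * ergotropyH H (E * condState w ρSA a * E) :=
    Finset.sum_filter_of_ne fun a _ h => (hp a).lt_of_ne (left_ne_zero_of_mul h).symm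
  refine ⟨hgain.trans hfilter.symm, hgain ▸ Finset.sum_nonneg fun a _ => ?_⟩
  exact mul_nonneg (hp a) (ergotropyH_nonneg _ _)

/-- Lemma 1: the daemonic gain for a fixed measurement basis equals the average
of the ergotropies of the non-normalized states `e^{-rH_S/2} ρ_{S|a} e^{-rH_S/2}` with respect
to the Hamiltonian `H̃_S = ∑ₖ (e^{r εₖ}/r)|uₖ⟩⟨uₖ|`, and is nonnegative. -/
theorem stmt1 {dS dA : ℕ} (r : ℝ) (hr : r ≠ 0)
    (ε : Fin dS → ℝ) (hε : StrictMono ε)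
    (v : Fin dS → Fin dS → ℂ) (hv : ONFam v)
    (ρSA : Matrix (Fin dS × Fin dA) (Fin dS × Fin dA) ℂ) (hρSA : IsDensity ρSA)
    (uvals : Fin dS → ℝ) (φ : Fin dS → Fin dS → ℂ)
    (hφ : ONFam φ) (hdec : Antitone uvals)
    (hspec : expHam ε v (-r/2) * ptraceA ρSA * expHam ε v (-r/2)
      = ∑ k, (uvals k : ℂ) • ketbra (φ k) (φ k))
    (w : Fin dA → Fin dA → ℂ) (hw : ONFam w) :
    daemonicUtil (expUtility r) (1/2) ε v w ρSA
        - optUtil (expUtility r) (1/2) ε v (ptraceA ρSA)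
      = ∑ a ∈ Finset.univ.filter (fun a => 0 < prob w ρSA a),
          prob w ρSA a *
            ergotropyH (∑ k, ((Real.exp (r * ε k) / r : ℝ) : ℂ) • ketbra (φ k) (φ k))
              (expHam ε v (-r/2) * condState w ρSA a * expHam ε v (-r/2)) ∧
    0 ≤ daemonicUtil (expUtility r) (1/2) ε v w ρSA
        - optUtil (expUtility r) (1/2) ε v (ptraceA ρSA) :=
  stmt1_general r ε hε v hv ρSA hρSA uvals φ hφ hdec hspec w hw

end Daemonic
end
end

section
/- For any density matrix ρ on ℂ^{d_S}, any unitary U on ℂ^{d_S} and any q ∈ ℝ, the first moment of the quasiprobability distribution of work equals the average work and is independent of q: Σ_{i,j,k} Re(⟨ε_i|ρ|ε_j⟩⟨ε_j|U†|ε_k⟩⟨ε_k|U|ε_i⟩) (q ε_i + (1−q) ε_j − ε_k) = Tr(H_S ρ) − Tr(H_S U ρ U†). -/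
/-!
Summing the complex quasiprobability over its last index `k` collapses `U†U` to the identity and
leaves the diagonal entries `⟨εᵢ|ρ|εᵢ⟩` at `i = j`, so the `q εᵢ` and `(1 - q) εⱼ` parts of the work
add up to `Tr(H_S ρ)` whatever `q` is. Summing over `i, j` instead leaves `⟨εₖ|UρU†|εₖ⟩`, which
gives `Tr(H_S UρU†)`. The complex first moment is therefore `Tr(H_S ρ) - Tr(H_S UρU†)`, which is
real since `ρ` and `UρU†` are Hermitian, so it coincides with the first moment of the real parts.
-/

open Matrix BigOperators Finset Kronecker
open scoped ComplexOrder

noncomputable section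

namespace Daemonic

namespace ONFam

variable {ι : Type*} [Fintype ι] [DecidableEq ι] {v : ι → ι → ℂ}

lemma sum_mul_star (hv : ONFam v) (a b : ι) :
    ∑ k, v k a * star (v k b) = if a = b then 1 else 0 := by
  let W : Matrix ι ι ℂ := Matrix.of fun k a => star (v k a)
  have hW : W * star W = 1 := by
    ext k l
    simpa [Matrix.mul_apply, Matrix.one_apply, W, dotProduct] using hv k l
  have hW' : star W * W = 1 := mul_eq_one_comm.mp hW
  simpa [Matrix.mul_apply, Matrix.one_apply, W, mul_comm] using congrFun (congrFun hW' a) b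

lemma sum_dotProduct_mul_star_dotProduct (hv : ONFam v) (x y : ι → ℂ) :
    ∑ k, (x ⬝ᵥ v k) * (star (v k) ⬝ᵥ y) = x ⬝ᵥ y := by
  calc ∑ k, (x ⬝ᵥ v k) * (star (v k) ⬝ᵥ y)
      = ∑ a, ∑ b, x a * y b * ∑ k, v k a * star (v k b) := by
        simp_rw [dotProduct, Finset.sum_mul_sum, Finset.mul_sum, Pi.star_apply]
        rw [Finset.sum_comm]
        refine Finset.sum_congr rfl fun a _ => ?_
        rw [Finset.sum_comm]
        refine Finset.sum_congr rfl fun b _ => Finset.sum_congr rfl fun k _ => ?_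
        ring
    _ = x ⬝ᵥ y := by simp only [hv.sum_mul_star]; simp [dotProduct]

lemma sum_matElem_mul_matElem (hv : ONFam v) (M N : Matrix ι ι ℂ) (x y : ι → ℂ) :
    ∑ k, matElem M x (v k) * matElem N (v k) y = matElem (M * N) x y := by
  simp only [matElem, Matrix.dotProduct_mulVec (star x) M]
  rw [hv.sum_dotProduct_mul_star_dotProduct, Matrix.dotProduct_mulVec, Matrix.vecMul_vecMul,
    Matrix.dotProduct_mulVec]

lemma matElem_one (hv : ONFam v) (i j : ι) : matElem 1 (v i) (v j) = if i = j then 1 else 0 := by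
  rw [matElem, Matrix.one_mulVec, hv i j]

end ONFam

lemma trace_ham_mul {n : ℕ} (ε : Fin n → ℝ) (v : Fin n → Fin n → ℂ)
    (σ : Matrix (Fin n) (Fin n) ℂ) :
    (ham ε v * σ).trace = ∑ k, (ε k : ℂ) * matElem σ (v k) (v k) := by
  simp only [ham, ketbra, Matrix.sum_mul, Matrix.trace_sum, Matrix.smul_mul, Matrix.trace_smul,
    smul_eq_mul, Matrix.vecMulVec_mul, Matrix.trace_vecMulVec, matElem, dotProduct_comm (v _),
    Matrix.dotProduct_mulVec]

lemma im_trace_ham_mul_eq_zero {n : ℕ} (ε : Fin n → ℝ) (v : Fin n → Fin n → ℂ)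
    {σ : Matrix (Fin n) (Fin n) ℂ} (hσ : σ.IsHermitian) : (ham ε v * σ).trace.im = 0 := by
  rw [trace_ham_mul, Complex.im_sum]
  refine Finset.sum_eq_zero fun k _ => ?_
  rw [Complex.im_ofReal_mul, matElem, ← RCLike.im_to_complex, hσ.im_star_dotProduct_mulVec_self,
    mul_zero]

def workQuasiprob {ι : Type*} [Fintype ι] (v : ι → ι → ℂ) (ρ U : Matrix ι ι ℂ) (i j k : ι) : ℂ :=
  matElem ρ (v i) (v j) * matElem Uᴴ (v j) (v k) * matElem U (v k) (v i)

section workQuasiprob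

variable {ι : Type*} [Fintype ι] [DecidableEq ι] {v : ι → ι → ℂ} (ρ : Matrix ι ι ℂ)
  {U : Matrix ι ι ℂ}

lemma sum_workQuasiprob_last (hv : ONFam v) (hU : Uᴴ * U = 1) (i j : ι) :
    ∑ k, workQuasiprob v ρ U i j k = if i = j then matElem ρ (v i) (v i) else 0 := by
  simp only [workQuasiprob, mul_assoc, ← Finset.mul_sum]
  rw [hv.sum_matElem_mul_matElem, hU, hv.matElem_one]
  by_cases h : i = j <;> simp [h, eq_comm]

lemma sum_sum_workQuasiprob_first (hv : ONFam v) (U : Matrix ι ι ℂ) (k : ι) :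
    ∑ i, ∑ j, workQuasiprob v ρ U i j k = matElem (U * ρ * Uᴴ) (v k) (v k) := by
  calc ∑ i, ∑ j, workQuasiprob v ρ U i j k
      = ∑ i, matElem U (v k) (v i) * ∑ j, matElem ρ (v i) (v j) * matElem Uᴴ (v j) (v k) := by
        simp only [workQuasiprob, Finset.mul_sum]
        exact Finset.sum_congr rfl fun i _ => Finset.sum_congr rfl fun j _ => by ring
    _ = matElem (U * ρ * Uᴴ) (v k) (v k) := by
        simp only [hv.sum_matElem_mul_matElem, mul_assoc]

lemma sum_workQuasiprob_mul (hv : ONFam v) (hU : Uᴴ * U = 1) (a b c : ι → ℂ) :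
    ∑ i, ∑ j, ∑ k, workQuasiprob v ρ U i j k * (a i + b j + c k) =
      ∑ i, (a i + b i) * matElem ρ (v i) (v i) + ∑ k, c k * matElem (U * ρ * Uᴴ) (v k) (v k) := by
  have hab : ∑ i, ∑ j, ∑ k, workQuasiprob v ρ U i j k * (a i + b j) =
      ∑ i, (a i + b i) * matElem ρ (v i) (v i) := by
    simp_rw [← Finset.sum_mul, sum_workQuasiprob_last ρ hv hU, ite_mul, zero_mul,
      Finset.sum_ite_eq, Finset.mem_univ, if_true, mul_comm]
  have hc : ∑ i, ∑ j, ∑ k, workQuasiprob v ρ U i j k * c k =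
      ∑ k, c k * matElem (U * ρ * Uᴴ) (v k) (v k) := by
    calc ∑ i, ∑ j, ∑ k, workQuasiprob v ρ U i j k * c k
        = ∑ i, ∑ k, ∑ j, workQuasiprob v ρ U i j k * c k :=
          Finset.sum_congr rfl fun _ _ => Finset.sum_comm
      _ = ∑ k, (∑ i, ∑ j, workQuasiprob v ρ U i j k) * c k := by
          rw [Finset.sum_comm]
          simp only [Finset.sum_mul]
      _ = ∑ k, c k * matElem (U * ρ * Uᴴ) (v k) (v k) := by
          simp only [sum_sum_workQuasiprob_first ρ hv, mul_comm (c _)]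
  simp only [mul_add _ (a _ + b _), Finset.sum_add_distrib, hab, hc]

end workQuasiprob

theorem stmt9_general {dS : ℕ} (q : ℝ)
    (ε : Fin dS → ℝ)
    (v : Fin dS → Fin dS → ℂ) (hv : ONFam v)
    (ρ : Matrix (Fin dS) (Fin dS) ℂ) (hρ : IsDensity ρ)
    (U : Matrix (Fin dS) (Fin dS) ℂ) (hU : U ∈ Matrix.unitaryGroup (Fin dS) ℂ) :
    ((∑ i, ∑ j, ∑ k,
        (matElem ρ (v i) (v j) * matElem Uᴴ (v j) (v k) * matElem U (v k) (v i)).re *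
          (q * ε i + (1 - q) * ε j - ε k) : ℝ) : ℂ)
      = (ham ε v * ρ).trace - (ham ε v * (U * ρ * Uᴴ)).trace := by
  have hUU : Uᴴ * U = 1 := Matrix.mem_unitaryGroup_iff'.mp hU
  set W : ℂ := (ham ε v * ρ).trace - (ham ε v * (U * ρ * Uᴴ)).trace
  have hW : ∑ i, ∑ j, ∑ k, workQuasiprob v ρ U i j k * ((q * ε i + (1 - q) * ε j - ε k : ℝ) : ℂ)
      = W := by
    have := sum_workQuasiprob_mul ρ hv hUU (fun i => (q : ℂ) * ε i) (fun j => (1 - q : ℂ) * ε j)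
      (fun k => -(ε k : ℂ))
    push_cast
    simp only [sub_eq_add_neg] at this ⊢
    simp only [this, W, trace_ham_mul, neg_mul, Finset.sum_neg_distrib, sub_eq_add_neg]
    congr 1
    exact Finset.sum_congr rfl fun i _ => by ring
  have hW_im : W.im = 0 := by
    rw [Complex.sub_im, im_trace_ham_mul_eq_zero ε v hρ.1.1,
      im_trace_ham_mul_eq_zero ε v (Matrix.isHermitian_mul_mul_conjTranspose U hρ.1.1), sub_zero]
  calc ((∑ i, ∑ j, ∑ k, (workQuasiprob v ρ U i j k).re * (q * ε i + (1 - q) * ε j - ε k) : ℝ) : ℂ)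
      = (W.re : ℂ) := by simp only [← hW, Complex.re_sum, Complex.re_mul_ofReal]
    _ = W := Complex.ext rfl (by simp [hW_im])

/-- the first moment of the quasiprobability distribution of work equals the
average work `Tr(H_S ρ) - Tr(H_S U ρ U†)`, independently of `q`. -/
theorem stmt9 {dS : ℕ} (q : ℝ)
    (ε : Fin dS → ℝ) (hε : StrictMono ε)
    (v : Fin dS → Fin dS → ℂ) (hv : ONFam v)
    (ρ : Matrix (Fin dS) (Fin dS) ℂ) (hρ : IsDensity ρ)
    (U : Matrix (Fin dS) (Fin dS) ℂ) (hU : U ∈ Matrix.unitaryGroup (Fin dS) ℂ) :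
    ((∑ i, ∑ j, ∑ k,
        (matElem ρ (v i) (v j) * matElem Uᴴ (v j) (v k) * matElem U (v k) (v i)).re *
          (q * ε i + (1 - q) * ε j - ε k) : ℝ) : ℂ)
      = (ham ε v * ρ).trace - (ham ε v * (U * ρ * Uᴴ)).trace :=
  stmt9_general q ε v hv ρ hρ U hU

end Daemonic
end
end
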